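/- Let q ∈ (0,1) be fixed. Then the function G defined for x > 0 by G(x) = [x + 1/2]_q^{-1/2} · Γ_q(x+1) / Γ_q(x + 1/2) is increasing on (0,∞) and tends to 1 as x → ∞; consequently G(x) ≤ 1 for all x > 0. -/

import Mathlib

/-!
With `L(c) = log (q^c; q)_∞ = ∑ₙ log (1 - q^(n+c))` one has
`Γ_q(y) = (1-q)^(1-y) · exp (L(1) - L(y))`, and the shift `L(c) = log (1 - q^c) + L(c+1)`
absorbs the bracket, so that `2 log G(x) = L(x+½) + L(x+3/2) - 2 L(x+1) = ∑ₙ φ(q^(n+x+½))` with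
`φ(t) = log (1-t) + log (1-ts²) - 2 log (1-ts)` and `s = √q`.
Since `(1-t)(1-ts²) = (1-ts)² - t(1-s)²`, we get `φ(t) = log (1 - t(1-s)²/(1-ts)²)`, which is
nonpositive and decreasing in `t ∈ [0,1)`. As `q^(n+x+½)` decreases in `x`, `log G` increases,
and dominated convergence gives `log G(x) → 0`.
-/

/-- The q-deformed Gamma function:
    `Γ_q(x) = (1-q)^(1-x) * ∏_{n=0}^∞ (1-q^(n+1))/(1-q^(n+x))`. -/
noncomputable def qGamma (q x : ℝ) : ℝ :=
  (1 - q) ^ (1 - x) * ∏' n : ℕ, (1 - q ^ ((n : ℝ) + 1)) / (1 - q ^ ((n : ℝ) + x))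

/-- The q-bracket: `[x]_q = (1-q^x)/(1-q)`. -/
noncomputable def qBracket (q x : ℝ) : ℝ := (1 - q ^ x) / (1 - q)

open Real Filter Topology

section SecondDiff

variable {s t : ℝ}

noncomputable def logOneSubSecondDiff (s t : ℝ) : ℝ :=
  log (1 - t) + log (1 - t * s ^ 2) - 2 * log (1 - t * s)

lemma one_sub_mul_pow_pos (hs0 : 0 ≤ s) (hs1 : s ≤ 1) (ht : t < 1) (k : ℕ) :
    0 < 1 - t * s ^ k := by
  rcases le_total 0 t with h | h
  · nlinarith [pow_le_one₀ hs0 hs1 (n := k)]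
  · nlinarith [pow_nonneg hs0 k]

lemma logOneSubSecondDiff_eq_log (hs0 : 0 ≤ s) (hs1 : s ≤ 1) (ht : t < 1) :
    logOneSubSecondDiff s t = log ((1 - t) * (1 - t * s ^ 2) / (1 - t * s) ^ 2) := by
  have h0 : 0 < 1 - t := by linarith
  have h1 := one_sub_mul_pow_pos hs0 hs1 ht 1
  have h2 := one_sub_mul_pow_pos hs0 hs1 ht 2
  rw [pow_one] at h1
  rw [logOneSubSecondDiff, log_div (by positivity) (by positivity), log_mul h0.ne' h2.ne',
    log_pow]
  push_cast
  ring

lemma logOneSubSecondDiff_nonpos (hs0 : 0 ≤ s) (hs1 : s ≤ 1) (ht0 : 0 ≤ t) (ht1 : t < 1) :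
    logOneSubSecondDiff s t ≤ 0 := by
  rw [logOneSubSecondDiff_eq_log hs0 hs1 ht1]
  have h0 : 0 < 1 - t := by linarith
  have h1 := one_sub_mul_pow_pos hs0 hs1 ht1 1
  have h2 := one_sub_mul_pow_pos hs0 hs1 ht1 2
  rw [pow_one] at h1
  refine log_nonpos (by positivity) ((div_le_one (by positivity)).2 ?_)
  -- `(1 - t) (1 - t s²) = (1 - t s)² - t (1 - s)²`
  nlinarith [mul_nonneg ht0 (sq_nonneg (1 - s))]

lemma logOneSubSecondDiff_antitoneOn (hs0 : 0 ≤ s) (hs1 : s ≤ 1) :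
    AntitoneOn (logOneSubSecondDiff s) (Set.Ico 0 1) := by
  rintro t ⟨ht0, ht1⟩ t' ⟨ht0', ht1'⟩ htt'
  rw [logOneSubSecondDiff_eq_log hs0 hs1 ht1, logOneSubSecondDiff_eq_log hs0 hs1 ht1']
  have h0 : 0 < 1 - t' := by linarith
  have h1 := one_sub_mul_pow_pos hs0 hs1 ht1' 1
  have h2 := one_sub_mul_pow_pos hs0 hs1 ht1' 2
  have h1' := one_sub_mul_pow_pos hs0 hs1 ht1 1
  rw [pow_one] at h1 h1'
  refine log_le_log (by positivity) ((div_le_div_iff₀ (by positivity) (by positivity)).2 ?_)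
  have key : t * (1 - t' * s) ^ 2 ≤ t' * (1 - t * s) ^ 2 :=
    mul_le_mul htt' (pow_le_pow_left₀ h1.le (by nlinarith) 2) (sq_nonneg _) ht0'
  nlinarith [mul_le_mul_of_nonneg_left key (sq_nonneg (1 - s))]

lemma tendsto_logOneSubSecondDiff_zero (s : ℝ) :
    Tendsto (logOneSubSecondDiff s) (𝓝 0) (𝓝 0) := by
  have hc : ContinuousAt (logOneSubSecondDiff s) 0 := by
    unfold logOneSubSecondDiff
    fun_prop (disch := norm_num)
  simpa [logOneSubSecondDiff] using hc.tendsto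

end SecondDiff

section QPochhammer

variable {q : ℝ}

lemma summable_log_one_sub_rpow (hq0 : 0 < q) (hq1 : q < 1) (c : ℝ) :
    Summable fun n : ℕ => log (1 - q ^ ((n : ℝ) + c)) := by
  have hgeom : Summable fun n : ℕ => -(q ^ c * q ^ n) :=
    ((summable_geometric_of_lt_one hq0.le hq1).mul_left _).neg
  refine (Real.summable_log_one_add_of_summable hgeom).congr fun n => ?_
  rw [rpow_add hq0, rpow_natCast, mul_comm, sub_eq_add_neg]

/-- `log (q^c; q)_∞`. -/
noncomputable def qLogPochhammer (q c : ℝ) : ℝ :=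
  ∑' n : ℕ, log (1 - q ^ ((n : ℝ) + c))

lemma qLogPochhammer_eq_log_add (hq0 : 0 < q) (hq1 : q < 1) (c : ℝ) :
    qLogPochhammer q c = log (1 - q ^ c) + qLogPochhammer q (c + 1) := by
  rw [qLogPochhammer, (summable_log_one_sub_rpow hq0 hq1 c).tsum_eq_zero_add, qLogPochhammer]
  simp only [Nat.cast_zero, zero_add, Nat.cast_succ, add_right_comm _ (1 : ℝ) c, add_assoc]

lemma qGamma_eq_rpow_mul_exp (hq0 : 0 < q) (hq1 : q < 1) {y : ℝ} (hy : 0 < y) :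
    qGamma q y = (1 - q) ^ (1 - y) * exp (qLogPochhammer q 1 - qLogPochhammer q y) := by
  have hpos : ∀ {r : ℝ}, 0 < r → 0 < 1 - q ^ r := fun hr =>
    sub_pos.2 (rpow_lt_one hq0.le hq1 hr)
  have hlog : ∀ n : ℕ, log ((1 - q ^ ((n : ℝ) + 1)) / (1 - q ^ ((n : ℝ) + y)))
      = log (1 - q ^ ((n : ℝ) + 1)) - log (1 - q ^ ((n : ℝ) + y)) := fun n =>
    log_div (hpos (by positivity)).ne' (hpos (by positivity)).ne'
  rw [qGamma, qLogPochhammer, qLogPochhammer, ← Summable.tsum_sub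
    (summable_log_one_sub_rpow hq0 hq1 1) (summable_log_one_sub_rpow hq0 hq1 y), ← funext hlog,
    rexp_tsum_eq_tprod (fun n => div_pos (hpos (by positivity)) (hpos (by positivity)))]
  exact (summable_log_one_sub_rpow hq0 hq1 1).sub (summable_log_one_sub_rpow hq0 hq1 y) |>.congr
    fun n => (hlog n).symm

end QPochhammer

section Ratio

variable {q : ℝ}

noncomputable def qGammaRatioLogTerm (q x : ℝ) (n : ℕ) : ℝ :=
  logOneSubSecondDiff (√q) (q ^ ((n : ℝ) + (x + 1 / 2)))

noncomputable def qGammaRatioLog (q x : ℝ) : ℝ :=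
  ∑' n : ℕ, qGammaRatioLogTerm q x n

lemma hasSum_qGammaRatioLogTerm (hq0 : 0 < q) (hq1 : q < 1) (x : ℝ) :
    HasSum (qGammaRatioLogTerm q x)
      (qLogPochhammer q (x + 1 / 2) + qLogPochhammer q (x + 3 / 2)
        - 2 * qLogPochhammer q (x + 1)) := by
  have hterm : ∀ n : ℕ, qGammaRatioLogTerm q x n
      = log (1 - q ^ ((n : ℝ) + (x + 1 / 2))) + log (1 - q ^ ((n : ℝ) + (x + 3 / 2)))
        - 2 * log (1 - q ^ ((n : ℝ) + (x + 1))) := fun n => by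
    rw [qGammaRatioLogTerm, logOneSubSecondDiff, sq_sqrt hq0.le, sqrt_eq_rpow,
      show (n : ℝ) + (x + 3 / 2) = (n + (x + 1 / 2)) + 1 by ring,
      show (n : ℝ) + (x + 1) = (n + (x + 1 / 2)) + 1 / 2 by ring, rpow_add hq0 (n + (x + 1 / 2)),
      rpow_add hq0 (n + (x + 1 / 2)), rpow_one]
  have hL := fun c => (summable_log_one_sub_rpow hq0 hq1 c).hasSum
  rw [funext hterm]
  exact ((hL _).add (hL _)).sub ((hL _).mul_left 2)

lemma rpow_natCast_add_mem_Ico (hq0 : 0 < q) (hq1 : q < 1) (n : ℕ) {r : ℝ} (hr : 0 < r) :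
    q ^ ((n : ℝ) + r) ∈ Set.Ico 0 1 :=
  ⟨(rpow_pos_of_pos hq0 _).le, rpow_lt_one hq0.le hq1 (by positivity)⟩

lemma qGammaRatio_eq_exp (hq0 : 0 < q) (hq1 : q < 1) {x : ℝ} (hx : -(1 / 2) < x) :
    qBracket q (x + 1 / 2) ^ (-(1 / 2) : ℝ) * qGamma q (x + 1) / qGamma q (x + 1 / 2)
      = exp (qGammaRatioLog q x / 2) := by
  have hq : 0 < 1 - q := by linarith
  have hb : 0 < 1 - q ^ (x + 1 / 2) := sub_pos.2 (rpow_lt_one hq0.le hq1 (by linarith))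
  rw [qBracket, qGamma_eq_rpow_mul_exp hq0 hq1 (by linarith),
    qGamma_eq_rpow_mul_exp hq0 hq1 (by linarith), rpow_def_of_pos (div_pos hb hq),
    rpow_def_of_pos hq, rpow_def_of_pos hq, log_div hb.ne' hq.ne', qGammaRatioLog,
    (hasSum_qGammaRatioLogTerm hq0 hq1 x).tsum_eq, qLogPochhammer_eq_log_add hq0 hq1 (x + 1 / 2)]
  simp only [← exp_add, ← exp_sub]
  ring_nf

lemma qGammaRatioLogTerm_nonpos (hq0 : 0 < q) (hq1 : q < 1) {x : ℝ} (hx : -(1 / 2) < x)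
    (n : ℕ) : qGammaRatioLogTerm q x n ≤ 0 :=
  have ht := rpow_natCast_add_mem_Ico hq0 hq1 n (r := x + 1 / 2) (by linarith)
  logOneSubSecondDiff_nonpos (sqrt_nonneg q) (sqrt_le_one.2 hq1.le) ht.1 ht.2

lemma qGammaRatioLogTerm_le (hq0 : 0 < q) (hq1 : q < 1) {x y : ℝ} (hx : -(1 / 2) < x)
    (hxy : x ≤ y) (n : ℕ) : qGammaRatioLogTerm q x n ≤ qGammaRatioLogTerm q y n :=
  logOneSubSecondDiff_antitoneOn (sqrt_nonneg q) (sqrt_le_one.2 hq1.le)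
    (rpow_natCast_add_mem_Ico hq0 hq1 n (by linarith))
    (rpow_natCast_add_mem_Ico hq0 hq1 n (by linarith))
    (rpow_le_rpow_of_exponent_ge hq0 hq1.le (by linarith))

lemma qGammaRatioLog_nonpos (hq0 : 0 < q) (hq1 : q < 1) {x : ℝ} (hx : -(1 / 2) < x) :
    qGammaRatioLog q x ≤ 0 :=
  tsum_nonpos (qGammaRatioLogTerm_nonpos hq0 hq1 hx)

lemma monotoneOn_qGammaRatioLog (hq0 : 0 < q) (hq1 : q < 1) :
    MonotoneOn (qGammaRatioLog q) (Set.Ioi (-(1 / 2))) := fun x hx _ _ hxy =>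
  (hasSum_qGammaRatioLogTerm hq0 hq1 x).summable.tsum_le_tsum
    (qGammaRatioLogTerm_le hq0 hq1 hx hxy) (hasSum_qGammaRatioLogTerm hq0 hq1 _).summable

lemma tendsto_qGammaRatioLog_atTop (hq0 : 0 < q) (hq1 : q < 1) :
    Tendsto (qGammaRatioLog q) atTop (𝓝 0) := by
  have hterm : ∀ n : ℕ, Tendsto (fun x => q ^ ((n : ℝ) + (x + 1 / 2))) atTop (𝓝 0) := fun n =>
    (tendsto_rpow_atTop_of_base_lt_one q (by linarith) hq1).comp
      (tendsto_atTop_add_const_left _ _ (tendsto_atTop_add_const_right _ _ tendsto_id))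
  -- dominated convergence: by monotonicity the terms at `x = 0` dominate those at `x ≥ 0`
  have h := tendsto_tsum_of_dominated_convergence
    (hasSum_qGammaRatioLogTerm hq0 hq1 0).summable.abs
    (fun n => (tendsto_logOneSubSecondDiff_zero (√q)).comp (hterm n)) ?_
  · rwa [tsum_zero] at h
  filter_upwards [eventually_ge_atTop 0] with x hx n
  have hle := qGammaRatioLogTerm_le hq0 hq1 (by norm_num) hx n
  change |qGammaRatioLogTerm q x n| ≤ |qGammaRatioLogTerm q 0 n|
  rw [abs_of_nonpos (qGammaRatioLogTerm_nonpos hq0 hq1 (by linarith) n),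
    abs_of_nonpos (qGammaRatioLogTerm_nonpos hq0 hq1 (by norm_num) n)]
  exact neg_le_neg hle

end Ratio

theorem qGammaRatio_G (q : ℝ) (hq : q ∈ Set.Ioo (0 : ℝ) 1) :
    MonotoneOn (fun x : ℝ => qBracket q (x + 1 / 2) ^ (-(1 / 2) : ℝ) * qGamma q (x + 1) / qGamma q (x + 1 / 2))
      (Set.Ioi (0 : ℝ)) ∧
    Filter.Tendsto (fun x : ℝ => qBracket q (x + 1 / 2) ^ (-(1 / 2) : ℝ) * qGamma q (x + 1) / qGamma q (x + 1 / 2))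
      Filter.atTop (nhds 1) ∧
    ∀ x : ℝ, 0 < x →
      qBracket q (x + 1 / 2) ^ (-(1 / 2) : ℝ) * qGamma q (x + 1) / qGamma q (x + 1 / 2) ≤ 1 := by
  obtain ⟨hq0, hq1⟩ := hq
  have hG : ∀ x : ℝ, 0 < x → qBracket q (x + 1 / 2) ^ (-(1 / 2) : ℝ) * qGamma q (x + 1)
      / qGamma q (x + 1 / 2) = exp (qGammaRatioLog q x / 2) := fun x hx =>
    qGammaRatio_eq_exp hq0 hq1 (by linarith)
  refine ⟨?_, ?_, fun x hx => ?_⟩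
  · have hmono := (monotoneOn_qGammaRatioLog hq0 hq1).mono
      (Set.Ioi_subset_Ioi (by norm_num : (-(1 / 2) : ℝ) ≤ 0))
    refine MonotoneOn.congr (fun x hx y hy hxy => ?_) fun x hx => (hG x hx).symm
    exact exp_le_exp.2 (by linarith [hmono hx hy hxy])
  · have h := ((tendsto_qGammaRatioLog_atTop hq0 hq1).div_const 2).rexp
    rw [zero_div, exp_zero] at h
    exact h.congr' ((eventually_gt_atTop 0).mono fun x hx => (hG x hx).symm)
  · rw [hG x hx, exp_le_one_iff]
    linarith [qGammaRatioLog_nonpos hq0 hq1 (show -(1 / 2) < x by linarith)]
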